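/- arXiv:2002.03612 — 6 statements merged into one kernel-verified Lean document; each statement's English description precedes it below -/
import Mathlib

section
/- O_n^{*T} equals the sum, over all sets S of pairs (i,j) (1 ≤ i < j ≤ n) with |S| ≤ n − 1, of the subalgebras A_S; that is, every element of O_n^{*T} can be written as a finite sum of elements, each of which lies in A_S for some set S of at most n − 1 pairs. (In other words, every Laurent polynomial in the differences z_i − z_j is a sum of rational functions each having at most n − 1 distinct pole divisors z_i = z_j.) -/
set_option synthInstance.maxHeartbeats 1000000
set_option maxHeartbeats 1000000


lemma dep_lemma (F : Type*) [Field F] (n : ℕ) (hn : 2 ≤ n)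
    (S : Finset (Fin n × Fin n)) (hcard : n ≤ S.card) :
    ∃ c : Fin n × Fin n → F, (∃ p ∈ S, c p ≠ 0) ∧ (∀ p, p ∉ S → c p = 0) ∧
      ∑ p ∈ S, c p • (Pi.single p.1 (1:F) - Pi.single p.2 1 : Fin n → F) = 0 := by
  classical
  set l : (Fin n → F) →ₗ[F] F :=
    { toFun := fun x => ∑ i, x i
      map_add' := fun x y => by simp [Finset.sum_add_distrib]
      map_smul' := fun a x => by simp [Finset.mul_sum] }
  have hlsurj : Function.Surjective l := by
    intro a
    refine ⟨Pi.single ⟨0, by omega⟩ a, ?_⟩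
    simp [l, Finset.sum_pi_single']
  have hrange : LinearMap.range l = ⊤ := LinearMap.range_eq_top.2 hlsurj
  have hker : Module.finrank F (LinearMap.ker l) = n - 1 := by
    have h1 := LinearMap.finrank_range_add_finrank_ker l
    rw [hrange] at h1
    simp [Module.finrank_self, Module.finrank_pi] at h1
    omega
  set v : Fin n × Fin n → (Fin n → F) :=
    fun p => Pi.single p.1 (1:F) - Pi.single p.2 1 with hv
  have hmem : ∀ p ∈ S, v p ∈ LinearMap.ker l := by
    intro p hp
    simp [LinearMap.mem_ker, l, v, Finset.sum_sub_distrib, Finset.sum_pi_single']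
  set v' : S → LinearMap.ker l := fun q => ⟨v q.1, hmem q.1 q.2⟩ with hv'
  have hni : ¬ LinearIndependent F v' := by
    intro hli
    have := hli.fintype_card_le_finrank
    rw [hker, Fintype.card_coe] at this
    omega
  rw [Fintype.not_linearIndependent_iff] at hni
  obtain ⟨g, hg0, q0, hq0⟩ := hni
  refine ⟨fun p => if hp : p ∈ S then g ⟨p, hp⟩ else 0, ⟨q0.1, q0.2, by simpa using hq0⟩,
    fun p hp => by simp [hp], ?_⟩
  have hg0' : ∑ q : S, g q • v q.1 = 0 := by
    have := congrArg (Submodule.subtype (LinearMap.ker l)) hg0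
    simpa [hv'] using this
  have key : ∑ p ∈ S, (if hp : p ∈ S then g ⟨p, hp⟩ else 0) • v p = 0 := by
    rw [← Finset.sum_attach S fun p => (if hp : p ∈ S then g ⟨p, hp⟩ else 0) • v p]
    rw [← hg0']
    exact Finset.sum_congr rfl fun q _ => by simp [q.2]
  simpa [v] using key

lemma rel_K {F K : Type*} [Field F] [Field K] [Algebra F K] {n : ℕ}
    (z : Fin n → K) (S : Finset (Fin n × Fin n)) (c : Fin n × Fin n → F)
    (hrel : ∑ p ∈ S, c p • (Pi.single p.1 (1:F) - Pi.single p.2 1 : Fin n → F) = 0) :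
    ∑ p ∈ S, c p • (z p.1 - z p.2) = 0 := by
  classical
  have hzv : ∀ p : Fin n × Fin n,
      z p.1 - z p.2 = ∑ k, ((Pi.single p.1 (1:F) - Pi.single p.2 1 : Fin n → F) k) • z k := by
    intro p
    simp [Pi.single_apply, sub_smul, Finset.sum_sub_distrib, ite_smul]
  calc ∑ p ∈ S, c p • (z p.1 - z p.2)
      = ∑ k, (∑ p ∈ S, c p • (Pi.single p.1 (1:F) - Pi.single p.2 1 : Fin n → F)) k • z k := by
        simp_rw [hzv, Finset.smul_sum, smul_smul]
        rw [Finset.sum_comm]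
        simp [Finset.sum_apply, Finset.sum_smul]
    _ = 0 := by rw [hrel]; simp

lemma key_lemma (F K : Type*) [Field F] [Field K] [Algebra F K] (n : ℕ) (hn : 2 ≤ n)
    (z : Fin n → K) (hznz : ∀ p : Fin n × Fin n, p.1 < p.2 → z p.1 - z p.2 ≠ 0)
    (M : Submodule F K)
    (hM : ∀ S : Finset (Fin n × Fin n), (∀ p ∈ S, p.1 < p.2) → S.card ≤ n - 1 →
      Subalgebra.toSubmodule (Algebra.adjoin F
        ({x : K | ∃ i j : Fin n, i < j ∧ x = z i - z j} ∪
         {x : K | ∃ p : Fin n × Fin n, p ∈ S ∧ x = (z p.1 - z p.2)⁻¹})) ≤ M) :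
    ∀ (N : ℕ) (m : Fin n × Fin n → ℕ), (∀ p, m p ≠ 0 → p.1 < p.2) →
      (∑ p, m p * ((finProdFinEquiv p : ℕ) + 1)) < N →
      ∀ g ∈ Algebra.adjoin F {x : K | ∃ i j : Fin n, i < j ∧ x = z i - z j},
      g * ∏ p, (z p.1 - z p.2)⁻¹ ^ m p ∈ M := by
  classical
  set D : Set K := {x : K | ∃ i j : Fin n, i < j ∧ x = z i - z j} with hD
  set w : Fin n × Fin n → ℕ := fun p => (finProdFinEquiv p : ℕ) + 1 with hw
  have hwinj : Function.Injective w := by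
    intro a b hab
    exact finProdFinEquiv.injective (Fin.val_injective (by simpa [hw] using hab))
  set f : Fin n × Fin n → K := fun p => z p.1 - z p.2 with hf
  intro N
  induction N using Nat.strong_induction_on with
  | _ N IH =>
  intro m hm hφ g hg
  set S := Finset.univ.filter (fun p : Fin n × Fin n => m p ≠ 0) with hSdef
  have hmS : ∀ p ∈ S, m p ≠ 0 := fun p hp => (Finset.mem_filter.1 hp).2
  have hSlt : ∀ p ∈ S, p.1 < p.2 := fun p hp => hm p (hmS p hp)
  have hprod_reduce : ∏ p, (f p)⁻¹ ^ m p = ∏ p ∈ S, (f p)⁻¹ ^ m p := by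
    symm
    refine Finset.prod_subset (Finset.subset_univ S) (fun p _ hp => ?_)
    have : m p = 0 := by
      by_contra h
      exact hp (Finset.mem_filter.2 ⟨Finset.mem_univ p, h⟩)
    simp [this]
  by_cases hcard : S.card ≤ n - 1
  · refine hM S hSlt hcard ?_
    show g * ∏ p, (f p)⁻¹ ^ m p ∈ Algebra.adjoin F
      (D ∪ {x : K | ∃ p : Fin n × Fin n, p ∈ S ∧ x = (z p.1 - z p.2)⁻¹})
    rw [hprod_reduce]
    refine mul_mem (Algebra.adjoin_mono Set.subset_union_left hg) ?_
    refine prod_mem fun p hp => pow_mem (Algebra.subset_adjoin ?_) _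
    exact Set.mem_union_right _ ⟨p, hp, rfl⟩
  · -- dependent case
    push_neg at hcard
    have hcard' : n ≤ S.card := by omega
    obtain ⟨c, ⟨p1, hp1S, hp1⟩, hc0, hrel⟩ := dep_lemma F n hn S hcard'
    have hrelK : ∑ p ∈ S, c p • (z p.1 - z p.2) = 0 := rel_K z S c hrel
    set T := S.filter (fun p => c p ≠ 0) with hTdef
    obtain ⟨q0, hq0T, hq0min⟩ := Finset.exists_min_image T w
      ⟨p1, Finset.mem_filter.2 ⟨hp1S, hp1⟩⟩
    have hq0S : q0 ∈ S := (Finset.mem_filter.1 hq0T).1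
    have hcq0 : c q0 ≠ 0 := (Finset.mem_filter.1 hq0T).2
    have hfq0 : f q0 ≠ 0 := hznz q0 (hSlt q0 hq0S)
    have hrelT : ∑ p ∈ T, c p • f p = 0 := by
      rw [← hrelK]
      refine Finset.sum_subset (Finset.filter_subset (fun p => c p ≠ 0) S) (fun p hp hnp => ?_)
      have : c p = 0 := by
        by_contra h
        exact hnp (Finset.mem_filter.2 ⟨hp, h⟩)
      simp [this]
    set E := T.erase q0 with hEdef
    have hA : ∑ q ∈ E, c q • f q = -(c q0 • f q0) := by
      have h := Finset.add_sum_erase T (fun q => c q • f q) hq0T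
      rw [hrelT] at h
      linear_combination h
    have hone : ∑ q ∈ E, (-(c q0)⁻¹ * c q) • (f q * (f q0)⁻¹) = 1 := by
      have step : ∀ q, (-(c q0)⁻¹ * c q) • (f q * (f q0)⁻¹)
          = (-(c q0)⁻¹) • ((c q • f q) * (f q0)⁻¹) := by
        intro q
        rw [mul_smul, smul_mul_assoc]
      rw [Finset.sum_congr rfl fun q _ => step q, ← Finset.smul_sum, ← Finset.sum_mul, hA]
      rw [neg_mul, smul_neg, neg_smul, neg_neg, smul_mul_assoc, smul_smul,
        inv_mul_cancel₀ hcq0, one_smul, mul_inv_cancel₀ hfq0]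
    -- rewrite x as a sum
    have hx : g * ∏ p, (f p)⁻¹ ^ m p
        = ∑ q ∈ E, (-(c q0)⁻¹ * c q) • (f q * (f q0)⁻¹ * (g * ∏ p, (f p)⁻¹ ^ m p)) := by
      have : ∀ q, (-(c q0)⁻¹ * c q) • (f q * (f q0)⁻¹ * (g * ∏ p, (f p)⁻¹ ^ m p))
          = ((-(c q0)⁻¹ * c q) • (f q * (f q0)⁻¹)) * (g * ∏ p, (f p)⁻¹ ^ m p) := by
        intro q; rw [smul_mul_assoc]
      rw [Finset.sum_congr rfl fun q _ => this q, ← Finset.sum_mul, hone, one_mul]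
    rw [hx]
    refine Submodule.sum_mem M fun q hqE => Submodule.smul_mem M _ ?_
    have hqT : q ∈ T := Finset.mem_of_mem_erase hqE
    have hqS : q ∈ S := (Finset.mem_filter.1 hqT).1
    have hqne : q ≠ q0 := Finset.ne_of_mem_erase hqE
    have hfq : f q ≠ 0 := hznz q (hSlt q hqS)
    have hmq : m q ≠ 0 := hmS q hqS
    have hmq0 : m q0 ≠ 0 := hmS q0 hq0S
    set m' : Fin n × Fin n → ℕ :=
      fun p => if p = q then m p - 1 else if p = q0 then m p + 1 else m p with hm'
    have hm'q : m' q = m q - 1 := by simp [hm']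
    have hm'q0 : m' q0 = m q0 + 1 := by simp [hm', (Ne.symm hqne)]
    have hm'other : ∀ p, p ≠ q → p ≠ q0 → m' p = m p := by
      intro p h1 h2; simp [hm', h1, h2]
    obtain ⟨k, hk⟩ : ∃ k, m q = k + 1 := ⟨m q - 1, by omega⟩
    have keyid : ∀ a b G : K, a ≠ 0 →
        a * b⁻¹ * (g * (a⁻¹ ^ (k+1) * (b⁻¹ ^ (m q0) * G))) =
        g * (a⁻¹ ^ k * (b⁻¹ ^ (m q0 + 1) * G)) := by
      intro a b G ha
      rw [pow_succ a⁻¹ k, pow_succ b⁻¹ (m q0)]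
      rw [show a * b⁻¹ * (g * (a⁻¹ ^ k * a⁻¹ * (b⁻¹ ^ (m q0) * G))) =
          (a * a⁻¹) * (g * (a⁻¹ ^ k * (b⁻¹ ^ (m q0) * b⁻¹ * G))) from by ring,
        mul_inv_cancel₀ ha, one_mul]
    -- product identity
    have hsplit : ∀ mm : Fin n × Fin n → ℕ, ∏ p, (f p)⁻¹ ^ mm p =
        (f q)⁻¹ ^ mm q * ((f q0)⁻¹ ^ mm q0 *
          ∏ p ∈ (Finset.univ.erase q).erase q0, (f p)⁻¹ ^ mm p) := by
      intro mm
      rw [← Finset.mul_prod_erase Finset.univ _ (Finset.mem_univ q),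
        ← Finset.mul_prod_erase (Finset.univ.erase q) _
          (Finset.mem_erase.2 ⟨Ne.symm hqne, Finset.mem_univ q0⟩)]
    have hPP : ∏ p ∈ (Finset.univ.erase q).erase q0, (f p)⁻¹ ^ m' p
        = ∏ p ∈ (Finset.univ.erase q).erase q0, (f p)⁻¹ ^ m p := by
      refine Finset.prod_congr rfl fun p hp => ?_
      have h2 := Finset.ne_of_mem_erase hp
      have h1 := Finset.ne_of_mem_erase (Finset.mem_of_mem_erase hp)
      rw [hm'other p h1 h2]
    have hprodeq : f q * (f q0)⁻¹ * (g * ∏ p, (f p)⁻¹ ^ m p)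
        = g * ∏ p, (f p)⁻¹ ^ m' p := by
      rw [hsplit m, hsplit m', hPP, hm'q, hm'q0, hk, show k + 1 - 1 = k from rfl]
      exact keyid (f q) (f q0) _ hfq
    rw [hprodeq]
    -- measure decreases
    have hwlt : w q0 < w q := by
      rcases lt_or_eq_of_le (hq0min q hqT) with h | h
      · exact h
      · exact absurd (hwinj h).symm hqne
    have hsum : ∀ mm : Fin n × Fin n → ℕ, ∑ p, mm p * w p =
        mm q * w q + (mm q0 * w q0 +
          ∑ p ∈ (Finset.univ.erase q).erase q0, mm p * w p) := by
      intro mm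
      rw [← Finset.add_sum_erase Finset.univ _ (Finset.mem_univ q),
        ← Finset.add_sum_erase (Finset.univ.erase q) _
          (Finset.mem_erase.2 ⟨Ne.symm hqne, Finset.mem_univ q0⟩)]
    have hSS : ∑ p ∈ (Finset.univ.erase q).erase q0, m' p * w p
        = ∑ p ∈ (Finset.univ.erase q).erase q0, m p * w p := by
      refine Finset.sum_congr rfl fun p hp => ?_
      have h2 := Finset.ne_of_mem_erase hp
      have h1 := Finset.ne_of_mem_erase (Finset.mem_of_mem_erase hp)
      rw [hm'other p h1 h2]
    have hφ' : (∑ p, m' p * w p) < ∑ p, m p * w p := by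
      rw [hsum m, hsum m', hSS, hm'q, hm'q0, hk]
      have e1 : (k + 1 - 1) * w q = k * w q := by norm_num
      rw [e1, add_mul, add_mul, one_mul, one_mul]
      linarith [hwlt]
    have hm' : ∀ p, m' p ≠ 0 → p.1 < p.2 := by
      intro p hp
      by_cases h1 : p = q
      · exact hm p (by rw [h1]; exact hmq)
      by_cases h2 : p = q0
      · subst h2; exact hSlt p hq0S
      · exact hm p (by rwa [hm'other p h1 h2] at hp)
    exact IH (∑ p, m p * w p) hφ m' hm' hφ' g hg

lemma mono_lemma (F K : Type*) [Field F] [Field K] [Algebra F K] (n : ℕ)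
    (z : Fin n → K) :
    ∀ x ∈ Submonoid.closure ({x : K | ∃ i j : Fin n, i < j ∧ x = z i - z j} ∪
        {x : K | ∃ i j : Fin n, i < j ∧ x = (z i - z j)⁻¹}),
    ∃ g ∈ Algebra.adjoin F {x : K | ∃ i j : Fin n, i < j ∧ x = z i - z j},
    ∃ m : Fin n × Fin n → ℕ, (∀ p, m p ≠ 0 → p.1 < p.2) ∧
      x = g * ∏ p, (z p.1 - z p.2)⁻¹ ^ m p := by
  classical
  intro x hx
  induction hx using Submonoid.closure_induction with
  | one => exact ⟨1, one_mem _, fun _ => 0, by simp, by simp⟩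
  | mem y hy =>
    rcases hy with hy | hy
    · exact ⟨y, Algebra.subset_adjoin hy, fun _ => 0, by simp, by simp⟩
    · obtain ⟨i, j, hij, rfl⟩ := hy
      refine ⟨1, one_mem _, fun p => if p = (i, j) then 1 else 0, ?_, ?_⟩
      · intro p hp
        by_cases h : p = (i, j)
        · subst h; exact hij
        · simp [h] at hp
      · rw [one_mul, Finset.prod_eq_single (i, j) ?_ ?_]
        · simp
        · intro b _ hb; simp [hb]
        · intro h; exact absurd (Finset.mem_univ _) h
  | mul a b ha hb iha ihb =>
    obtain ⟨ga, hga, ma, hma, rfl⟩ := iha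
    obtain ⟨gb, hgb, mb, hmb, rfl⟩ := ihb
    refine ⟨ga * gb, mul_mem hga hgb, fun p => ma p + mb p, ?_, ?_⟩
    · intro p hp
      have hp' : ma p + mb p ≠ 0 := hp
      by_cases h : ma p = 0
      · exact hmb p (by omega)
      · exact hma p h
    · simp_rw [pow_add]
      rw [Finset.prod_mul_distrib]
      ring

/-- let `F` be a field of characteristic `0`, `n ≥ 2`, and let `K` be
the field of rational functions `F(z₁,…,z_n)`, i.e. the fraction field of
`F[z₁,…,z_n]` (given abstractly, with `z i` the image of the `i`-th variable).
Let `O_n^{*T}` be the `F`-subalgebra of `K` generated by the `z i - z j` and their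
inverses (`i < j`), and for a set `S` of pairs `(i,j)`, `i < j`, let `A_S` be the
`F`-subalgebra generated by all `z i - z j` together with the inverses
`(z i - z j)⁻¹` for `(i,j) ∈ S`.  Then `O_n^{*T}` equals the sum (the supremum of
submodules, i.e. the set of finite sums) of the subalgebras `A_S` over all `S` with
`|S| ≤ n - 1`: every Laurent polynomial in the differences `z i - z j` is a finite
sum of rational functions, each having at most `n - 1` distinct pole divisors. -/
theorem statement12 (F : Type*) [Field F] [CharZero F] (n : ℕ) (hn : 2 ≤ n)
    (K : Type*) [Field K] [Algebra F K] [Algebra (MvPolynomial (Fin n) F) K]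
    [IsScalarTower F (MvPolynomial (Fin n) F) K]
    [IsFractionRing (MvPolynomial (Fin n) F) K]
    (z : Fin n → K)
    (hz : ∀ i : Fin n, z i = algebraMap (MvPolynomial (Fin n) F) K (MvPolynomial.X i)) :
    Subalgebra.toSubmodule (Algebra.adjoin F
      ({x : K | ∃ i j : Fin n, i < j ∧ x = z i - z j} ∪
       {x : K | ∃ i j : Fin n, i < j ∧ x = (z i - z j)⁻¹}))
    = ⨆ S : {S : Finset (Fin n × Fin n) // (∀ p ∈ S, p.1 < p.2) ∧ S.card ≤ n - 1},
        Subalgebra.toSubmodule (Algebra.adjoin F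
          ({x : K | ∃ i j : Fin n, i < j ∧ x = z i - z j} ∪
           {x : K | ∃ p : Fin n × Fin n, p ∈ S.1 ∧ x = (z p.1 - z p.2)⁻¹})) := by
  classical
  have hinj := IsFractionRing.injective (MvPolynomial (Fin n) F) K
  have hznz : ∀ p : Fin n × Fin n, p.1 < p.2 → z p.1 - z p.2 ≠ 0 := by
    intro p hp h0
    rw [hz, hz, ← map_sub] at h0
    have h1 : (MvPolynomial.X p.1 - MvPolynomial.X p.2 : MvPolynomial (Fin n) F) = 0 := by
      apply hinj
      rw [h0, map_zero]
    exact sub_ne_zero.2 (MvPolynomial.X_injective.ne (ne_of_lt hp)) h1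
  apply le_antisymm
  · rw [Algebra.adjoin_eq_span, Submodule.span_le]
    intro x hx
    obtain ⟨g, hg, m, hm, rfl⟩ := mono_lemma F K n z x hx
    refine key_lemma F K n hn z hznz _ ?_
      (∑ p, m p * ((finProdFinEquiv p : ℕ) + 1) + 1) m hm (by omega) g hg
    intro S h1 h2
    exact le_iSup (fun S : {S : Finset (Fin n × Fin n) //
        (∀ p ∈ S, p.1 < p.2) ∧ S.card ≤ n - 1} =>
      Subalgebra.toSubmodule (Algebra.adjoin F
        ({x : K | ∃ i j : Fin n, i < j ∧ x = z i - z j} ∪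
         {x : K | ∃ p : Fin n × Fin n, p ∈ S.1 ∧ x = (z p.1 - z p.2)⁻¹}))) ⟨S, h1, h2⟩
  · refine iSup_le fun S => ?_
    apply Subalgebra.toSubmodule.monotone
    apply Algebra.adjoin_mono
    apply Set.union_subset_union_right
    rintro x ⟨p, hpS, rfl⟩
    exact ⟨p.1, p.2, S.2.1 p hpS, rfl⟩
end

section
/- Let W = ⊕_{k≥−1} W^k be a ℤ-graded Lie superalgebra over a field F of characteristic 0, and let K ∈ W^1 be an odd element with [K,K] = 0 (a Poisson structure). Then the bracket {·,·}_K satisfies the Jacobi identity on ΠW^{−1}: for all homogeneous a,b,c ∈ W^{−1}, {{a,b}_K, c}_K − {a, {b,c}_K}_K + (−1)^{(1+p(a))(1+p(b))} {b, {a,c}_K}_K = 0, where p denotes parity in W. Together with its skewsymmetry, this makes {·,·}_K a Lie superalgebra bracket on ΠW^{−1}. -/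
set_option synthInstance.maxHeartbeats 1000000
set_option maxHeartbeats 1000000

universe u v

/-- A `ℤ`-graded Lie superalgebra `W = ⊕_{k ≥ -1} W^k` over a field `F`:
a vector space `L` with a direct sum parity decomposition `L = L₀ ⊕ L₁`,
a grading `L = ⊕_{k ≥ -1} W k` by subspaces compatible with the parity
decomposition, and a bilinear bracket satisfying `[W^j, W^k] ⊆ W^{j+k}`,
respecting parity, and satisfying super skewsymmetry and the super Jacobi
identity (stated in the two parity cases, which determine them on all
homogeneous elements and hence, by bilinearity, in general). -/
structure GradedLieSuperalgebra (F : Type u) [Field F] where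
  L : Type v
  [instAddCommGroup : AddCommGroup L]
  [instModule : Module F L]
  /-- The bilinear bracket `[·,·]`. -/
  bk : L →ₗ[F] L →ₗ[F] L
  /-- The even part `L₀`. -/
  evenPart : Submodule F L
  /-- The odd part `L₁`. -/
  oddPart : Submodule F L
  parity_codisjoint : evenPart ⊔ oddPart = ⊤
  parity_disjoint : evenPart ⊓ oddPart = ⊥
  /-- The `ℤ`-grading: `W k = 0` for `k < -1`, `L = ⊕_k W k`. -/
  W : ℤ → Submodule F L
  W_bot : ∀ k : ℤ, k < -1 → W k = ⊥
  W_iSup : (⨆ k : ℤ, W k) = ⊤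
  W_indep : ∀ k : ℤ, Disjoint (W k) (⨆ j : ℤ, ⨆ _ : j ≠ k, W j)
  W_parity : ∀ k : ℤ, W k = (W k ⊓ evenPart) ⊔ (W k ⊓ oddPart)
  bk_W : ∀ (j k : ℤ) (x y : L), x ∈ W j → y ∈ W k → bk x y ∈ W (j + k)
  bk_even_even : ∀ x y : L, x ∈ evenPart → y ∈ evenPart → bk x y ∈ evenPart
  bk_even_odd : ∀ x y : L, x ∈ evenPart → y ∈ oddPart → bk x y ∈ oddPart
  bk_odd_even : ∀ x y : L, x ∈ oddPart → y ∈ evenPart → bk x y ∈ oddPart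
  bk_odd_odd : ∀ x y : L, x ∈ oddPart → y ∈ oddPart → bk x y ∈ evenPart
  /-- Super skewsymmetry `[x,y] = -(-1)^{p(x)p(y)}[y,x]`, case `p(x)p(y) = 0`. -/
  skew_of_even : ∀ x y : L, (x ∈ evenPart ∨ y ∈ evenPart) → bk x y = - bk y x
  /-- Super skewsymmetry `[x,y] = -(-1)^{p(x)p(y)}[y,x]`, case `p(x) = p(y) = 1`. -/
  skew_of_odd : ∀ x y : L, x ∈ oddPart → y ∈ oddPart → bk x y = bk y x
  /-- Super Jacobi identity `[x,[y,z]] = [[x,y],z] + (-1)^{p(x)p(y)}[y,[x,z]]`,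
  case `p(x)p(y) = 0`. -/
  jacobi_of_even : ∀ x y z : L, (x ∈ evenPart ∨ y ∈ evenPart) →
    bk x (bk y z) = bk (bk x y) z + bk y (bk x z)
  /-- Super Jacobi identity, case `p(x) = p(y) = 1`. -/
  jacobi_of_odd : ∀ x y z : L, x ∈ oddPart → y ∈ oddPart →
    bk x (bk y z) = bk (bk x y) z - bk y (bk x z)

attribute [instance] GradedLieSuperalgebra.instAddCommGroup GradedLieSuperalgebra.instModule

namespace GradedLieSuperalgebra

variable {F : Type u} [Field F] (G : GradedLieSuperalgebra F)

open scoped Classical in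
/-- The parity `p(x) ∈ {0,1}` of an element; this is the correct parity
for homogeneous elements (`pa x = 1` iff `x ∈ L₁`). -/
noncomputable def pa (x : G.L) : ℕ := if x ∈ G.oddPart then 1 else 0

/-- The bracket `{f,g}_K = (-1)^{1+p(f)} [[K,f],g]` on `ΠW^{-1}` associated to
`K ∈ W^1`. -/
noncomputable def pbK (K f g : G.L) : G.L :=
  ((-1 : ℤ) ^ (1 + G.pa f)) • G.bk (G.bk K f) g

end GradedLieSuperalgebra

/-- if `K ∈ W^1` is odd with `[K,K] = 0`, then the bracket
`{f,g}_K = (-1)^{1+p(f)}[[K,f],g]` satisfies the Jacobi identity on `ΠW^{-1}`: for all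
homogeneous `a,b,c ∈ W^{-1}`,
`{{a,b}_K,c}_K - {a,{b,c}_K}_K + (-1)^{(1+p(a))(1+p(b))} {b,{a,c}_K}_K = 0`. -/
theorem statement14 {F : Type u} [Field F] [CharZero F] (G : GradedLieSuperalgebra F)
    (K : G.L) (hK : K ∈ G.W 1) (hKodd : K ∈ G.oddPart) (hKK : G.bk K K = 0)
    (a b c : G.L) (ha : a ∈ G.W (-1)) (hb : b ∈ G.W (-1)) (hc : c ∈ G.W (-1))
    (haH : a ∈ G.evenPart ∨ a ∈ G.oddPart) (hbH : b ∈ G.evenPart ∨ b ∈ G.oddPart)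
    (hcH : c ∈ G.evenPart ∨ c ∈ G.oddPart) :
    G.pbK K (G.pbK K a b) c - G.pbK K a (G.pbK K b c)
      + ((-1 : ℤ) ^ ((1 + G.pa a) * (1 + G.pa b))) • G.pbK K b (G.pbK K a c) = 0 := by

  classical
  have hDD : ∀ x : G.L, G.bk K (G.bk K x) = 0 := by
    intro x
    have h := G.jacobi_of_odd K K x hKodd hKodd
    rw [hKK] at h
    simp only [map_zero, LinearMap.zero_apply, zero_sub] at h
    have h2 : (2 : F) • G.bk K (G.bk K x) = 0 := by
      rw [two_smul]
      nth_rewrite 1 [h]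
      exact neg_add_cancel _
    exact (smul_eq_zero.mp h2).resolve_left two_ne_zero
  by_cases hao : a ∈ G.oddPart
  · by_cases hbo : b ∈ G.oddPart
    · -- a odd, b odd
      have pa_a : G.pa a = 1 := by simp [GradedLieSuperalgebra.pa, hao]
      have pa_b : G.pa b = 1 := by simp [GradedLieSuperalgebra.pa, hbo]
      have hDa : G.bk K a ∈ G.evenPart := G.bk_odd_odd K a hKodd hao
      have hDb : G.bk K b ∈ G.evenPart := G.bk_odd_odd K b hKodd hbo
      have hz : G.bk (G.bk K a) b ∈ G.oddPart := G.bk_even_odd _ b hDa hbo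
      have hbr : G.bk K (G.bk (G.bk K a) b) = G.bk (G.bk K a) (G.bk K b) := by
        have h := G.jacobi_of_even K (G.bk K a) b (Or.inr hDa)
        rw [hDD a] at h
        simpa using h
      have hP : G.pbK K a b = G.bk (G.bk K a) b := by
        simp only [GradedLieSuperalgebra.pbK, pa_a]
        norm_num
      have hQb : G.pbK K b c = G.bk (G.bk K b) c := by
        simp only [GradedLieSuperalgebra.pbK, pa_b]
        norm_num
      have hQa : G.pbK K a c = G.bk (G.bk K a) c := by
        simp only [GradedLieSuperalgebra.pbK, pa_a]
        norm_num
      have pa_z : G.pa (G.bk (G.bk K a) b) = 1 := by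
        simp [GradedLieSuperalgebra.pa, hz]
      rw [hP, hQb, hQa]
      simp only [GradedLieSuperalgebra.pbK, pa_z, pa_a, pa_b]
      norm_num
      rw [hbr, G.jacobi_of_even (G.bk K a) (G.bk K b) c (Or.inl hDa)]
      abel
    · -- a odd, b even
      have hbe : b ∈ G.evenPart := hbH.resolve_right hbo
      have pa_a : G.pa a = 1 := by simp [GradedLieSuperalgebra.pa, hao]
      have pa_b : G.pa b = 0 := by simp [GradedLieSuperalgebra.pa, hbo]
      have hDa : G.bk K a ∈ G.evenPart := G.bk_odd_odd K a hKodd hao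
      have hDb : G.bk K b ∈ G.oddPart := G.bk_odd_even K b hKodd hbe
      have hze : G.bk (G.bk K a) b ∈ G.evenPart := G.bk_even_even _ b hDa hbe
      have hbr : G.bk K (G.bk (G.bk K a) b) = G.bk (G.bk K a) (G.bk K b) := by
        have h := G.jacobi_of_even K (G.bk K a) b (Or.inr hDa)
        rw [hDD a] at h
        simpa using h
      have hP : G.pbK K a b = G.bk (G.bk K a) b := by
        simp only [GradedLieSuperalgebra.pbK, pa_a]
        norm_num
      have hQb : G.pbK K b c = -(G.bk (G.bk K b) c) := by
        simp only [GradedLieSuperalgebra.pbK, pa_b]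
        norm_num
      have hQa : G.pbK K a c = G.bk (G.bk K a) c := by
        simp only [GradedLieSuperalgebra.pbK, pa_a]
        norm_num
      have hT1 : G.pbK K (G.bk (G.bk K a) b) c
          = -(G.bk (G.bk (G.bk K a) (G.bk K b)) c) := by
        by_cases hzo : G.bk (G.bk K a) b ∈ G.oddPart
        · have hz0 : G.bk (G.bk K a) b = 0 := by
            have h0 : G.bk (G.bk K a) b ∈ G.evenPart ⊓ G.oddPart := ⟨hze, hzo⟩
            rw [G.parity_disjoint] at h0
            simpa using h0
          have hzz : G.bk (G.bk K a) (G.bk K b) = 0 := by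
            rw [← hbr, hz0]
            simp
          rw [hz0, hzz]
          simp [GradedLieSuperalgebra.pbK]
        · have pa_z : G.pa (G.bk (G.bk K a) b) = 0 := by
            simp [GradedLieSuperalgebra.pa, hzo]
          simp only [GradedLieSuperalgebra.pbK, pa_z]
          rw [hbr]
          norm_num
      rw [hP, hQb, hQa, hT1]
      simp only [GradedLieSuperalgebra.pbK, pa_a, pa_b]
      norm_num
      rw [G.jacobi_of_even (G.bk K a) (G.bk K b) c (Or.inl hDa)]
      abel
  · have hae : a ∈ G.evenPart := haH.resolve_right hao
    by_cases hbo : b ∈ G.oddPart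
    · -- a even, b odd
      have pa_a : G.pa a = 0 := by simp [GradedLieSuperalgebra.pa, hao]
      have pa_b : G.pa b = 1 := by simp [GradedLieSuperalgebra.pa, hbo]
      have hDa : G.bk K a ∈ G.oddPart := G.bk_odd_even K a hKodd hae
      have hDb : G.bk K b ∈ G.evenPart := G.bk_odd_odd K b hKodd hbo
      have hze : G.bk (G.bk K a) b ∈ G.evenPart := G.bk_odd_odd _ b hDa hbo
      have hbr : G.bk K (G.bk (G.bk K a) b) = -(G.bk (G.bk K a) (G.bk K b)) := by
        have h := G.jacobi_of_odd K (G.bk K a) b hKodd hDa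
        rw [hDD a] at h
        simpa using h
      have hP : G.pbK K a b = -(G.bk (G.bk K a) b) := by
        simp only [GradedLieSuperalgebra.pbK, pa_a]
        norm_num
      have hQb : G.pbK K b c = G.bk (G.bk K b) c := by
        simp only [GradedLieSuperalgebra.pbK, pa_b]
        norm_num
      have hQa : G.pbK K a c = -(G.bk (G.bk K a) c) := by
        simp only [GradedLieSuperalgebra.pbK, pa_a]
        norm_num
      have hT1 : G.pbK K (-(G.bk (G.bk K a) b)) c
          = -(G.bk (G.bk (G.bk K a) (G.bk K b)) c) := by
        by_cases hzo : G.bk (G.bk K a) b ∈ G.oddPart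
        · have hz0 : G.bk (G.bk K a) b = 0 := by
            have h0 : G.bk (G.bk K a) b ∈ G.evenPart ⊓ G.oddPart := ⟨hze, hzo⟩
            rw [G.parity_disjoint] at h0
            simpa using h0
          have hzz : G.bk (G.bk K a) (G.bk K b) = 0 := by
            have h := hbr
            rw [hz0] at h
            simp only [map_zero, LinearMap.zero_apply] at h
            · exact (neg_eq_zero.mp h.symm)
          rw [hz0, hzz]
          simp [GradedLieSuperalgebra.pbK]
        · have pa_z : G.pa (-(G.bk (G.bk K a) b)) = 0 := by
            have : ¬ (-(G.bk (G.bk K a) b) ∈ G.oddPart) := by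
              intro h
              exact hzo ((neg_mem_iff).mp h)
            simp [GradedLieSuperalgebra.pa, this]
          simp only [GradedLieSuperalgebra.pbK, pa_z, map_neg, LinearMap.neg_apply, hbr]
          norm_num
      rw [hP, hQb, hQa, hT1]
      simp only [GradedLieSuperalgebra.pbK, pa_a, pa_b]
      norm_num
      rw [G.jacobi_of_even (G.bk K a) (G.bk K b) c (Or.inr hDb)]
      abel
    · -- a even, b even
      have hbe : b ∈ G.evenPart := hbH.resolve_right hbo
      have pa_a : G.pa a = 0 := by simp [GradedLieSuperalgebra.pa, hao]
      have pa_b : G.pa b = 0 := by simp [GradedLieSuperalgebra.pa, hbo]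
      have hDa : G.bk K a ∈ G.oddPart := G.bk_odd_even K a hKodd hae
      have hDb : G.bk K b ∈ G.oddPart := G.bk_odd_even K b hKodd hbe
      have hz : G.bk (G.bk K a) b ∈ G.oddPart := G.bk_odd_even _ b hDa hbe
      have hbr : G.bk K (G.bk (G.bk K a) b) = -(G.bk (G.bk K a) (G.bk K b)) := by
        have h := G.jacobi_of_odd K (G.bk K a) b hKodd hDa
        rw [hDD a] at h
        simpa using h
      have hP : G.pbK K a b = -(G.bk (G.bk K a) b) := by
        simp only [GradedLieSuperalgebra.pbK, pa_a]
        norm_num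
      have hQb : G.pbK K b c = -(G.bk (G.bk K b) c) := by
        simp only [GradedLieSuperalgebra.pbK, pa_b]
        norm_num
      have hQa : G.pbK K a c = -(G.bk (G.bk K a) c) := by
        simp only [GradedLieSuperalgebra.pbK, pa_a]
        norm_num
      have pa_z : G.pa (-(G.bk (G.bk K a) b)) = 1 := by
        have : -(G.bk (G.bk K a) b) ∈ G.oddPart := neg_mem hz
        simp [GradedLieSuperalgebra.pa, this]
      rw [hP, hQb, hQa]
      simp only [GradedLieSuperalgebra.pbK, pa_z, pa_a, pa_b, map_neg,
        LinearMap.neg_apply, hbr]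
      norm_num
      rw [G.jacobi_of_odd (G.bk K a) (G.bk K b) c hDa hDb]
      abel
end

section
/- (Lenard–Magri scheme.) Let W = ⊕_{k≥−1} W^k be a ℤ-graded Lie superalgebra over a field F of characteristic 0, let K, H ∈ W^1 be odd elements, let N ≥ 1 be an integer, and let h₀, h₁, …, h_N be odd elements of W^{−1} (i.e., even elements of ΠW^{−1}) such that [H, h_n] = [K, h_{n+1}] for all n = 0, …, N−1. Then [[K, h_m], h_n] = 0 and [[H, h_m], h_n] = 0 for all m, n = 0, …, N (i.e., {h_m, h_n}_K = {h_m, h_n}_H = 0). -/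
set_option synthInstance.maxHeartbeats 1000000
set_option maxHeartbeats 1000000

universe u v

/-- Auxiliary: for `X` odd and `f, g` odd in `W^{-1}`, the bracket
`[[X,f],g]` is antisymmetric in `f, g`. -/
lemma aux_antisym {F : Type u} [Field F] (G : GradedLieSuperalgebra F)
    (X f g : G.L) (hX : X ∈ G.oddPart) (hf : f ∈ G.oddPart) (hg : g ∈ G.oddPart)
    (hfW : f ∈ G.W (-1)) (hgW : g ∈ G.W (-1)) :
    G.bk (G.bk X f) g = - G.bk (G.bk X g) f := by
  have hfg : G.bk f g = 0 := by
    have hmem := G.bk_W (-1) (-1) f g hfW hgW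
    rw [show ((-1 : ℤ) + -1) = -2 by norm_num, G.W_bot (-2) (by norm_num)] at hmem
    simpa using hmem
  have hj := G.jacobi_of_odd f X g hf hX
  have hs := G.skew_of_odd f X hf hX
  have he := G.skew_of_even f (G.bk X g) (Or.inr (G.bk_odd_odd X g hX hg))
  rw [hfg, map_zero, sub_zero, hs, he] at hj
  exact hj.symm

/-- Auxiliary: in a module over a char-zero field, `x = -x` implies `x = 0`. -/
lemma aux_eq_neg {F : Type u} [Field F] [CharZero F] {M : Type v} [AddCommGroup M]
    [Module F M] {x : M} (hx : x = -x) : x = 0 := by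
  have h2 : (2 : F) • x = 0 := by
    rw [two_smul]; nth_rewrite 1 [hx]; exact neg_add_cancel x
  rcases smul_eq_zero.mp h2 with h | h
  · exact absurd h two_ne_zero
  · exact h

/-- Lenard–Magri scheme: let `K, H ∈ W^1` be odd, `N ≥ 1`, and let
`h₀, …, h_N` be odd elements of `W^{-1}` with `[H,h_n] = [K,h_{n+1}]` for
`n = 0, …, N-1`.  Then `[[K,h_m],h_n] = 0 = [[H,h_m],h_n]` for all `m,n = 0, …, N`. -/
theorem statement16 {F : Type u} [Field F] [CharZero F] (G : GradedLieSuperalgebra F)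
    (K H : G.L) (hK : K ∈ G.W 1) (hKodd : K ∈ G.oddPart)
    (hH : H ∈ G.W 1) (hHodd : H ∈ G.oddPart)
    (N : ℕ) (hN : 1 ≤ N) (h : ℕ → G.L)
    (hmem : ∀ n ≤ N, h n ∈ G.W (-1)) (hodd : ∀ n ≤ N, h n ∈ G.oddPart)
    (hrec : ∀ n < N, G.bk H (h n) = G.bk K (h (n + 1))) :
    ∀ m ≤ N, ∀ n ≤ N,
      G.bk (G.bk K (h m)) (h n) = 0 ∧ G.bk (G.bk H (h m)) (h n) = 0 := by
  have antiK : ∀ m ≤ N, ∀ n ≤ N,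
      G.bk (G.bk K (h m)) (h n) = - G.bk (G.bk K (h n)) (h m) := fun m hm n hn =>
    aux_antisym G K (h m) (h n) hKodd (hodd m hm) (hodd n hn) (hmem m hm) (hmem n hn)
  have antiH : ∀ m ≤ N, ∀ n ≤ N,
      G.bk (G.bk H (h m)) (h n) = - G.bk (G.bk H (h n)) (h m) := fun m hm n hn =>
    aux_antisym G H (h m) (h n) hHodd (hodd m hm) (hodd n hn) (hmem m hm) (hmem n hn)
  have shift : ∀ m n, m + 1 ≤ N → n + 1 ≤ N →
      G.bk (G.bk K (h (m + 1))) (h n) = G.bk (G.bk K (h m)) (h (n + 1)):= by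
    intro m n hm hn
    calc G.bk (G.bk K (h (m + 1))) (h n) = G.bk (G.bk H (h m)) (h n) := by
          rw [hrec m (by omega)]
      _ = - G.bk (G.bk H (h n)) (h m) := antiH m (by omega) n (by omega)
      _ = - G.bk (G.bk K (h (n + 1))) (h m) := by rw [hrec n (by omega)]
      _ = G.bk (G.bk K (h m)) (h (n + 1)) := by
          rw [antiK (n + 1) hn m (by omega), neg_neg]
  have key : ∀ k, ∀ m n, m ≤ N → n ≤ N → m = n + k →
      G.bk (G.bk K (h m)) (h n) = 0 := by
    intro k
    induction k using Nat.strong_induction_on with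
    | _ k ih =>
      intro m n hm hn hmn
      match k with
      | 0 =>
        have hd := antiK m hm n hn
        rw [show m = n by omega] at hd ⊢
        exact aux_eq_neg (F := F) hd
      | 1 =>
        have h1 : G.bk (G.bk K (h m)) (h n) = G.bk (G.bk K (h n)) (h (n + 1)) := by
          rw [show m = n + 1 by omega]
          exact shift n n (by omega) (by omega)
        have h2 := antiK n hn (n + 1) (by omega)
        rw [show m = n + 1 by omega] at h1 ⊢
        exact aux_eq_neg (F := F) (h1.trans h2)
      | (k + 2) =>
        have hs : G.bk (G.bk K (h m)) (h n) = G.bk (G.bk K (h (n + k + 1))) (h (n + 1)) := by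
          rw [show m = (n + k + 1) + 1 by omega]
          exact shift (n + k + 1) n (by omega) (by omega)
        rw [hs]
        exact ih k (by omega) (n + k + 1) (n + 1) (by omega) (by omega) (by omega)
  have hA : ∀ m ≤ N, ∀ n ≤ N, G.bk (G.bk K (h m)) (h n) = 0 := by
    intro m hm n hn
    rcases le_or_gt n m with hle | hlt
    · exact key (m - n) m n hm hn (by omega)
    · rw [antiK m hm n hn, key (n - m) n m hn hm (by omega), neg_zero]
  intro m hm n hn
  refine ⟨hA m hm n hn, ?_⟩
  rcases lt_or_eq_of_le hm with hmN | hmN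
  · rw [hrec m hmN]
    exact hA (m + 1) (by omega) n hn
  · rcases lt_or_eq_of_le hn with hnN | hnN
    · rw [antiH m hm n hn, hrec n hnN, hA (n + 1) (by omega) m hm, neg_zero]
    · rw [hmN, hnN]
      exact aux_eq_neg (F := F) (antiH N le_rfl N le_rfl)
end

section
/- Let W = ⊕_{k≥−1} W^k be a ℤ-graded Lie superalgebra over a field F of characteristic 0, and let K, H ∈ W^1 be compatible Poisson structures, i.e., odd elements with [K,K] = [H,H] = [K,H] = 0. Assume moreover that every even element X ∈ W^0 with [K,X] = 0 can be written as X = [K,f] for some odd f ∈ W^{−1} (vanishing of the even part of the first cohomology of (W, ad K)). Then, if N ≥ 1 and h₀, …, h_N are odd elements of W^{−1} with [H, h_n] = [K, h_{n+1}] for all n = 0, …, N−1, there exists an odd element h_{N+1} ∈ W^{−1} such that [H, h_N] = [K, h_{N+1}]. -/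
set_option synthInstance.maxHeartbeats 1000000
set_option maxHeartbeats 1000000

universe u v

/-- let `K, H ∈ W^1` be compatible Poisson structures
(`[K,K] = [H,H] = [K,H] = 0`) and assume every even `X ∈ W^0` with `[K,X] = 0` is of
the form `X = [K,f]` for some odd `f ∈ W^{-1}`.  If `N ≥ 1` and `h₀, …, h_N` are odd
elements of `W^{-1}` with `[H,h_n] = [K,h_{n+1}]` for `n = 0, …, N-1`, then there is
an odd `h_{N+1} ∈ W^{-1}` with `[H,h_N] = [K,h_{N+1}]`. -/
theorem statement17 {F : Type u} [Field F] [CharZero F] (G : GradedLieSuperalgebra F)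
    (K H : G.L) (hK : K ∈ G.W 1) (hKodd : K ∈ G.oddPart)
    (hH : H ∈ G.W 1) (hHodd : H ∈ G.oddPart)
    (hKK : G.bk K K = 0) (hHH : G.bk H H = 0) (hKH : G.bk K H = 0)
    (hcoh : ∀ x : G.L, x ∈ G.W 0 → x ∈ G.evenPart → G.bk K x = 0 →
      ∃ f : G.L, f ∈ G.W (-1) ∧ f ∈ G.oddPart ∧ x = G.bk K f)
    (N : ℕ) (hN : 1 ≤ N) (h : ℕ → G.L)
    (hmem : ∀ n ≤ N, h n ∈ G.W (-1)) (hodd : ∀ n ≤ N, h n ∈ G.oddPart)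
    (hrec : ∀ n < N, G.bk H (h n) = G.bk K (h (n + 1))) :
    ∃ hN1 : G.L, hN1 ∈ G.W (-1) ∧ hN1 ∈ G.oddPart ∧ G.bk H (h N) = G.bk K hN1 := by
  have hN1pos : N - 1 < N := Nat.sub_lt (by omega) one_pos
  have hrec' : G.bk K (h N) = G.bk H (h (N - 1)) := by
    have := hrec (N - 1) hN1pos
    rw [Nat.sub_add_cancel hN] at this
    exact this.symm
  set X := G.bk H (h N) with hX
  have hXW : X ∈ G.W 0 := by
    have := G.bk_W 1 (-1) H (h N) hH (hmem N le_rfl)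
    simpa using this
  have hXeven : X ∈ G.evenPart := G.bk_odd_odd H (h N) hHodd (hodd N le_rfl)
  have hHHf : ∀ f : G.L, G.bk H (G.bk H f) = 0 := by
    intro f
    have j := G.jacobi_of_odd H H f hHodd hHodd
    rw [hHH] at j
    simp only [map_zero, LinearMap.zero_apply, zero_sub] at j
    have h2 : (2 : F) • G.bk H (G.bk H f) = 0 := by
      rw [two_smul, ← eq_neg_iff_add_eq_zero]
      exact j
    rcases smul_eq_zero.mp h2 with h2' | h2'
    · exact absurd h2' two_ne_zero
    · exact h2'
  have hKX : G.bk K X = 0 := by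
    have j := G.jacobi_of_odd K H (h N) hKodd hHodd
    rw [hKH] at j
    simp only [map_zero, LinearMap.zero_apply, zero_sub] at j
    rw [hX, j, hrec', hHHf, neg_zero]
  obtain ⟨f, hfW, hfodd, hfK⟩ := hcoh X hXW hXeven hKX
  exact ⟨f, hfW, hfodd, hfK⟩
end

section
/- Let W = ⊕_{k≥−1} W^k be a ℤ-graded Lie superalgebra over a field F of characteristic 0, and let K, H ∈ W^1 be compatible Poisson structures, i.e., odd elements with [K,K] = [H,H] = [K,H] = 0, such that every even element X ∈ W^0 with [K,X] = 0 can be written as X = [K,f] for some odd f ∈ W^{−1}. If h ∈ W^{−1} is an odd element with [K,h] = 0, then there exists an infinite sequence h₀ = h, h₁, h₂, … of odd elements of W^{−1} such that [H, h_n] = [K, h_{n+1}] for every n ≥ 0. -/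
set_option synthInstance.maxHeartbeats 1000000
set_option maxHeartbeats 1000000

universe u v

/-- let `K, H ∈ W^1` be compatible Poisson structures such that every
even `X ∈ W^0` with `[K,X] = 0` is of the form `[K,f]` for some odd `f ∈ W^{-1}`.
If `h ∈ W^{-1}` is odd with `[K,h] = 0`, then there is an infinite sequence
`h₀ = h, h₁, h₂, …` of odd elements of `W^{-1}` with `[H,h_n] = [K,h_{n+1}]` for all
`n ≥ 0`. -/
theorem statement18 {F : Type u} [Field F] [CharZero F] (G : GradedLieSuperalgebra F)
    (K H : G.L) (hK : K ∈ G.W 1) (hKodd : K ∈ G.oddPart)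
    (hH : H ∈ G.W 1) (hHodd : H ∈ G.oddPart)
    (hKK : G.bk K K = 0) (hHH : G.bk H H = 0) (hKH : G.bk K H = 0)
    (hcoh : ∀ x : G.L, x ∈ G.W 0 → x ∈ G.evenPart → G.bk K x = 0 →
      ∃ f : G.L, f ∈ G.W (-1) ∧ f ∈ G.oddPart ∧ x = G.bk K f)
    (h : G.L) (hh : h ∈ G.W (-1)) (hhodd : h ∈ G.oddPart) (hKh : G.bk K h = 0) :
    ∃ seq : ℕ → G.L, seq 0 = h
      ∧ (∀ n : ℕ, seq n ∈ G.W (-1) ∧ seq n ∈ G.oddPart)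
      ∧ (∀ n : ℕ, G.bk H (seq n) = G.bk K (seq (n + 1))) := by
  have hHHx : ∀ x : G.L, G.bk H (G.bk H x) = 0 := by
    intro x
    have j := G.jacobi_of_odd H H x hHodd hHodd
    rw [hHH] at j
    simp only [map_zero, LinearMap.zero_apply, zero_sub] at j
    have h2 : (2 : F) • G.bk H (G.bk H x) = 0 := by
      rw [two_smul]; nth_rewrite 1 [j]; simp
    rcases smul_eq_zero.mp h2 with h2' | h2'
    · exact absurd h2' two_ne_zero
    · exact h2'
  have hstep : ∀ x : G.L, (x ∈ G.W (-1) ∧ x ∈ G.oddPart ∧ G.bk K (G.bk H x) = 0) →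
      ∃ y : G.L, (y ∈ G.W (-1) ∧ y ∈ G.oddPart ∧ G.bk K (G.bk H y) = 0) ∧
        G.bk H x = G.bk K y := by
    rintro x ⟨hx1, hx2, hx3⟩
    have hX0 : G.bk H x ∈ G.W 0 := by
      have := G.bk_W 1 (-1) H x hH hx1; simpa using this
    have hXe : G.bk H x ∈ G.evenPart := G.bk_odd_odd H x hHodd hx2
    obtain ⟨f, hf1, hf2, hf3⟩ := hcoh _ hX0 hXe hx3
    refine ⟨f, ⟨hf1, hf2, ?_⟩, hf3⟩
    have j := G.jacobi_of_odd K H f hKodd hHodd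
    rw [hKH, ← hf3] at j
    simp only [map_zero, LinearMap.zero_apply, zero_sub] at j
    rw [j, hHHx x, neg_zero]
  have hP0 : h ∈ G.W (-1) ∧ h ∈ G.oddPart ∧ G.bk K (G.bk H h) = 0 := by
    refine ⟨hh, hhodd, ?_⟩
    have j := G.jacobi_of_odd K H h hKodd hHodd
    rw [hKH, hKh] at j
    simpa using j
  choose next hnextP hnexteq using hstep
  let seq : ℕ → {x : G.L // x ∈ G.W (-1) ∧ x ∈ G.oddPart ∧ G.bk K (G.bk H x) = 0} :=
    fun n => Nat.rec ⟨h, hP0⟩ (fun _ s => ⟨next s.1 s.2, hnextP s.1 s.2⟩) n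
  refine ⟨fun n => (seq n).1, rfl, fun n => ⟨(seq n).2.1, (seq n).2.2.1⟩, fun n => ?_⟩
  exact hnexteq (seq n).1 (seq n).2
end

section
/- Let W = ⊕_{k≥−1} W^k be a ℤ-graded Lie superalgebra over a field F of characteristic 0, and let K, H ∈ W^1 be compatible Poisson structures, i.e., odd elements with [K,K] = [H,H] = [K,H] = 0, such that every even element X ∈ W^0 with [K,X] = 0 can be written as X = [K,f] for some odd f ∈ W^{−1}. Let (h_n)_{n≥0} and (g_n)_{n≥0} be two infinite sequences of odd elements of W^{−1} satisfying [H, h_n] = [K, h_{n+1}] and [H, g_n] = [K, g_{n+1}] for all n ≥ 0, and assume [K, h₀] = 0. Then for all m, n ≥ 0 and for P equal to either K or H: [[P, h_m], h_n] = 0, [[P, g_m], g_n] = 0, and [[P, h_m], g_n] = 0 (i.e., all the brackets {h_m,h_n}, {g_m,g_n}, {h_m,g_n} with respect to both Poisson structures vanish). -/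
set_option synthInstance.maxHeartbeats 1000000
set_option maxHeartbeats 1000000

universe u v

section Aux

variable {F : Type u} [Field F] (G : GradedLieSuperalgebra F)

/-- Antisymmetry of `[[P,f],g]` in `f,g` for odd `P` and odd `f,g ∈ W^{-1}`. -/
lemma aux_antisym_s19 (P f g : G.L) (hP : P ∈ G.oddPart)
    (hf1 : f ∈ G.W (-1)) (hfo : f ∈ G.oddPart)
    (hg1 : g ∈ G.W (-1)) (hgo : g ∈ G.oddPart) :
    G.bk (G.bk P f) g = - G.bk (G.bk P g) f := by
  have hgf : G.bk g f = 0 := by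
    have h2 := G.bk_W (-1) (-1) g f hg1 hf1
    rw [show (-1 : ℤ) + -1 = -2 by norm_num, G.W_bot (-2) (by norm_num)] at h2
    simpa using h2
  have hPf_even : G.bk P f ∈ G.evenPart := G.bk_odd_odd P f hP hfo
  have h1 : G.bk (G.bk P f) g = - G.bk g (G.bk P f) :=
    G.skew_of_even _ _ (Or.inl hPf_even)
  have h2 : G.bk g (G.bk P f) = G.bk (G.bk g P) f - G.bk P (G.bk g f) :=
    G.jacobi_of_odd g P f hgo hP
  have h3 : G.bk g P = G.bk P g := G.skew_of_odd g P hgo hP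
  rw [h1, h2, h3, hgf]
  simp

/-- Shifting identity for two hierarchies. -/
lemma aux_shift (K H : G.L) (hKo : K ∈ G.oddPart) (hHo : H ∈ G.oddPart)
    (x y : ℕ → G.L)
    (hx : ∀ n, x n ∈ G.W (-1) ∧ x n ∈ G.oddPart)
    (hy : ∀ n, y n ∈ G.W (-1) ∧ y n ∈ G.oddPart)
    (hxr : ∀ n, G.bk H (x n) = G.bk K (x (n + 1)))
    (hyr : ∀ n, G.bk H (y n) = G.bk K (y (n + 1))) :
    ∀ n m, G.bk (G.bk K (x m)) (y n) = G.bk (G.bk K (x (m + n))) (y 0) := by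
  intro n
  induction n with
  | zero => intro m; rfl
  | succ n ih =>
    intro m
    have a1 := aux_antisym_s19 G K (x m) (y (n + 1)) hKo (hx m).1 (hx m).2
      (hy (n + 1)).1 (hy (n + 1)).2
    have a2 := aux_antisym_s19 G H (x m) (y n) hHo (hx m).1 (hx m).2
      (hy n).1 (hy n).2
    have hidx : m + 1 + n = m + (n + 1) := by omega
    rw [a1, ← hyr n, ← a2, hxr m, ih (m + 1), hidx]

end Aux

/-- let `K, H ∈ W^1` be compatible Poisson structures such that every
even `X ∈ W^0` with `[K,X] = 0` is of the form `[K,f]` for some odd `f ∈ W^{-1}`.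
Let `(h_n)` and `(g_n)` be infinite sequences of odd elements of `W^{-1}` with
`[H,h_n] = [K,h_{n+1}]`, `[H,g_n] = [K,g_{n+1}]` for all `n`, and `[K,h₀] = 0`.
Then for all `m, n ≥ 0` and `P ∈ {K,H}`:
`[[P,h_m],h_n] = [[P,g_m],g_n] = [[P,h_m],g_n] = 0`. -/
theorem statement19 {F : Type u} [Field F] [CharZero F] (G : GradedLieSuperalgebra F)
    (K H : G.L) (hK : K ∈ G.W 1) (hKodd : K ∈ G.oddPart)
    (hH : H ∈ G.W 1) (hHodd : H ∈ G.oddPart)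
    (hKK : G.bk K K = 0) (hHH : G.bk H H = 0) (hKH : G.bk K H = 0)
    (hcoh : ∀ x : G.L, x ∈ G.W 0 → x ∈ G.evenPart → G.bk K x = 0 →
      ∃ f : G.L, f ∈ G.W (-1) ∧ f ∈ G.oddPart ∧ x = G.bk K f)
    (h g : ℕ → G.L)
    (hhmem : ∀ n : ℕ, h n ∈ G.W (-1) ∧ h n ∈ G.oddPart)
    (hgmem : ∀ n : ℕ, g n ∈ G.W (-1) ∧ g n ∈ G.oddPart)
    (hhrec : ∀ n : ℕ, G.bk H (h n) = G.bk K (h (n + 1)))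
    (hgrec : ∀ n : ℕ, G.bk H (g n) = G.bk K (g (n + 1)))
    (hKh0 : G.bk K (h 0) = 0) :
    ∀ m n : ℕ, ∀ P : G.L, P = K ∨ P = H →
      G.bk (G.bk P (h m)) (h n) = 0
      ∧ G.bk (G.bk P (g m)) (g n) = 0
      ∧ G.bk (G.bk P (h m)) (g n) = 0 := by
  have hzero : ∀ x : G.L, G.bk (G.bk K (h 0)) x = 0 := by
    intro x; rw [hKh0]; simp
  -- h-h brackets with K
  have hhK : ∀ m n : ℕ, G.bk (G.bk K (h m)) (h n) = 0 := by
    intro m n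
    rw [aux_shift G K H hKodd hHodd h h hhmem hhmem hhrec hhrec n m,
      aux_antisym_s19 G K (h (m + n)) (h 0) hKodd (hhmem _).1 (hhmem _).2
        (hhmem _).1 (hhmem _).2, hzero]
    simp
  -- h-g brackets with K
  have hgK : ∀ m n : ℕ, G.bk (G.bk K (h m)) (g n) = 0 := by
    intro m n
    rw [aux_antisym_s19 G K (h m) (g n) hKodd (hhmem _).1 (hhmem _).2
        (hgmem _).1 (hgmem _).2,
      aux_shift G K H hKodd hHodd g h hgmem hhmem hgrec hhrec m n,
      aux_antisym_s19 G K (g (n + m)) (h 0) hKodd (hgmem _).1 (hgmem _).2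
        (hhmem _).1 (hhmem _).2, hzero]
    simp
  -- g-g brackets with K
  have ggK : ∀ m n : ℕ, G.bk (G.bk K (g m)) (g n) = 0 := by
    intro m n
    set X := G.bk (G.bk K (g (m + n))) (g 0) with hXdef
    have e1 : G.bk (G.bk K (g m)) (g n) = X :=
      aux_shift G K H hKodd hHodd g g hgmem hgmem hgrec hgrec n m
    have e2 : X = - G.bk (G.bk K (g 0)) (g (m + n)) :=
      aux_antisym_s19 G K (g (m + n)) (g 0) hKodd (hgmem _).1 (hgmem _).2
        (hgmem _).1 (hgmem _).2
    have e3 : G.bk (G.bk K (g 0)) (g (m + n)) = X := by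
      have := aux_shift G K H hKodd hHodd g g hgmem hgmem hgrec hgrec (m + n) 0
      simpa using this
    have hX : X = -X := e2.trans (by rw [e3])
    have hXX : X + X = 0 := eq_neg_iff_add_eq_zero.mp hX
    have h2 : (2 : F) • X = 0 := by rw [two_smul]; exact hXX
    have hX0 : X = 0 := by
      rcases smul_eq_zero.mp h2 with h' | h'
      · exact absurd h' two_ne_zero
      · exact h'
    rw [e1, hX0]
  intro m n P hP
  rcases hP with rfl | rfl
  · exact ⟨hhK m n, ggK m n, hgK m n⟩
  · refine ⟨?_, ?_, ?_⟩
    · rw [hhrec m]; exact hhK (m + 1) n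
    · rw [hgrec m]; exact ggK (m + 1) n
    · rw [hhrec m]; exact hgK (m + 1) n
end
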